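/- arXiv:1404.1449 — 3 statements merged into one kernel-verified Lean document; each statement's English description precedes it below -/
import Mathlib

section
/- Let n ≥ 2 and let f : ℝⁿ → ℝ be indistinguishable (invariant under every permutation of its n arguments) and twice differentiable at the symmetric point c^⊗n = (c,…,c). Then for every h ∈ ℝⁿ with Σ_{j=1}^n h_j = 0, the Hessian quadratic form of f at c^⊗n satisfies Σ_{j=1}^n Σ_{j'=1}^n h_j h_{j'} · ∂²f/∂a_j∂a_{j'} (c^⊗n) = ( ∂²f/∂a_1² (c^⊗n) − ∂²f/∂a_1∂a_2 (c^⊗n) ) · Σ_{j=1}^n h_j². -/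
/-!
Permuting the coordinates is a linear change of variables, so permutation invariance of `f`
passes to the matrix `H` of second partial derivatives at the diagonal point `c^⊗n`:
`H (σ i) (σ j) = H i j`. Since permutations act 2-transitively, `H = B • J + (A - B) • 1`
with `A` its diagonal and `B` its off-diagonal value, and the all-ones matrix `J` contributes
`B (∑ h_j)² = 0` to the quadratic form.
-/

open Finset

section QuadraticForm

variable {ι R : Type*} [Fintype ι] [DecidableEq ι] [CommRing R]

theorem sum_sum_mul_mul_eq_of_sum_eq_zero {H : ι → ι → R} {a b : R}
    (hdiag : ∀ i, H i i = a) (hoff : ∀ i j, i ≠ j → H i j = b) {h : ι → R}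
    (hsum : ∑ i, h i = 0) :
    ∑ i, ∑ j, h i * h j * H i j = (a - b) * ∑ i, h i ^ 2 := by
  have hH : ∀ i j, H i j = b + if i = j then a - b else 0 := by
    intro i j
    split_ifs with hij
    · rw [← hij, hdiag]; ring
    · rw [hoff i j hij, add_zero]
  have hb : ∑ i, ∑ j, h i * h j * b = 0 := by
    simp only [← sum_mul, ← mul_sum, hsum, mul_zero, zero_mul, sum_const_zero]
  simp only [hH, mul_add, sum_add_distrib, hb, zero_add, mul_ite, mul_zero, sum_ite_eq, mem_univ,
    if_true, mul_sum]
  exact sum_congr rfl fun i _ => by ring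

end QuadraticForm

section PermInvariant

variable {α β : Type*} {H : α → α → β}

theorem apply_self_eq_of_perm_invariant [DecidableEq α]
    (hH : ∀ (σ : Equiv.Perm α) i j, H (σ i) (σ j) = H i j) (i k : α) : H i i = H k k := by
  simpa using (hH (Equiv.swap i k) i i).symm

theorem apply_eq_of_perm_invariant_of_ne (hH : ∀ (σ : Equiv.Perm α) i j, H (σ i) (σ j) = H i j)
    {i j k l : α} (hij : i ≠ j) (hkl : k ≠ l) : H i j = H k l := by
  obtain ⟨σ, hσi, hσj⟩ :=
    MulAction.is_two_pretransitive_iff.mp (Equiv.Perm.isMultiplyPretransitive α 2) hij hkl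
  rw [← hσi, ← hσj]
  exact (hH σ i j).symm

end PermInvariant

section SecondDerivative

variable {𝕜 E F : Type*} [NontriviallyNormedField 𝕜] [NormedAddCommGroup E] [NormedSpace 𝕜 E]
  [NormedAddCommGroup F] [NormedSpace 𝕜 F] {f : E → F}

theorem fderiv_apply_eq_of_comp_eq (e : E ≃L[𝕜] E) (hf : f ∘ e = f) (x v : E) :
    fderiv 𝕜 f x v = fderiv 𝕜 f (e x) (e v) := by
  conv_lhs => rw [← hf]
  rw [e.comp_right_fderiv]
  rfl

theorem fderiv_fderiv_apply_eq_of_comp_eq (e : E ≃L[𝕜] E) (hf : f ∘ e = f) (x u v : E) :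
    fderiv 𝕜 (fun y => fderiv 𝕜 f y v) x u =
      fderiv 𝕜 (fun y => fderiv 𝕜 f y (e v)) (e x) (e u) := by
  have hcomp : (fun y => fderiv 𝕜 f y v) = (fun y => fderiv 𝕜 f y (e v)) ∘ e :=
    funext fun y => fderiv_apply_eq_of_comp_eq e hf y v
  rw [hcomp, e.comp_right_fderiv]
  rfl

theorem fderiv_fderiv_single_perm {ι : Type*} [Fintype ι] [DecidableEq ι] {f : (ι → 𝕜) → F}
    (hsym : ∀ (π : Equiv.Perm ι) (a : ι → 𝕜), f (a ∘ π) = f a) (c : 𝕜) (σ : Equiv.Perm ι)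
    (i j : ι) :
    fderiv 𝕜 (fun y => fderiv 𝕜 f y (Pi.single (σ j) 1)) (fun _ => c) (Pi.single (σ i) 1) =
      fderiv 𝕜 (fun y => fderiv 𝕜 f y (Pi.single j 1)) (fun _ => c) (Pi.single i 1) := by
  let e : (ι → 𝕜) ≃L[𝕜] (ι → 𝕜) :=
    { LinearEquiv.funCongrLeft 𝕜 𝕜 σ with
      continuous_toFun := continuous_pi fun i => continuous_apply (σ i)
      continuous_invFun := continuous_pi fun i => continuous_apply (σ.symm i) }
  have he : ∀ a, e a = a ∘ σ := fun _ => rfl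
  rw [fderiv_fderiv_apply_eq_of_comp_eq e (funext (hsym σ)), he, he, he,
    Pi.single_comp_equiv, Pi.single_comp_equiv, Equiv.symm_apply_apply, Equiv.symm_apply_apply]
  rfl

end SecondDerivative

/-- For an indistinguishable function `f : ℝⁿ → ℝ` twice
differentiable at the symmetric point `(c,…,c)`, the Hessian quadratic form in
any zero-mean direction `h` equals
`(∂²f/∂a₁²(c^⊗n) − ∂²f/∂a₁∂a₂(c^⊗n)) · Σ h_j²`. -/
theorem stmt_4 (n : ℕ) (hn : 2 ≤ n) (f : (Fin n → ℝ) → ℝ) (c : ℝ)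
    (hsym : ∀ (π : Equiv.Perm (Fin n)) (a : Fin n → ℝ), f (a ∘ π) = f a) :
    ∀ h : Fin n → ℝ, ∑ j, h j = 0 →
      ∑ j, ∑ j', h j * h j' *
          fderiv ℝ (fun y => fderiv ℝ f y (Pi.single j' 1)) (fun _ => c) (Pi.single j 1) =
        (fderiv ℝ (fun y => fderiv ℝ f y (Pi.single (⟨0, by omega⟩ : Fin n) 1))
            (fun _ => c) (Pi.single (⟨0, by omega⟩ : Fin n) 1) -
         fderiv ℝ (fun y => fderiv ℝ f y (Pi.single (⟨1, by omega⟩ : Fin n) 1))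
            (fun _ => c) (Pi.single (⟨0, by omega⟩ : Fin n) 1)) *
        ∑ j, (h j) ^ 2 := by
  intro h hsum
  have hH := fderiv_fderiv_single_perm hsym c
  exact sum_sum_mul_mul_eq_of_sum_eq_zero (fun j => apply_self_eq_of_perm_invariant hH j _)
    (fun j j' hjj' => apply_eq_of_perm_invariant_of_ne hH hjj' (by simp [Fin.ext_iff])) hsum
end

section
/- Let n ≥ 2, c ∈ ℝ, R > 0, and let f : ℝⁿ → ℝ be indistinguishable (invariant under every permutation of its n arguments) and twice continuously differentiable on an open set containing the closed Euclidean ball B̄(c^⊗n, R) centered at the symmetric point c^⊗n = (c,…,c). Then there exists δ > 0 such that for every a ∈ B̄(c^⊗n, R), writing m̄ = (1/n) Σ_{j=1}^n a_j for the mean of a and r̄(x) = f(x,…,x) for the diagonal restriction, one has |f(a) − r̄(m̄)| ≤ δ · ‖a − m̄^⊗n‖², where ‖·‖ denotes the Euclidean norm on ℝⁿ. -/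
/-!
At a point `(x, …, x)` of the diagonal, the derivative of a permutation-invariant function is a
permutation-invariant linear form, hence a multiple of `v ↦ ∑ vᵢ`; it therefore vanishes on
`a - m̄^⊗n`, whose coordinates sum to zero. The first-order Taylor expansion of `f` at `m̄^⊗n` thus
reduces to `f(m̄^⊗n)`, and its remainder is bounded by `C ‖a - m̄^⊗n‖²`, where `C` bounds the second
derivative of `f` on the (convex, compact) ball.
-/

open Finset

theorem LinearMap.map_eq_zero_of_sum_eq_zero_of_comp_perm {R M ι : Type*} [Semiring R]
    [AddCommMonoid M] [Module R M] [Fintype ι] [DecidableEq ι] (L : (ι → R) →ₗ[R] M)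
    (hL : ∀ (σ : Equiv.Perm ι) (w : ι → R), L (w ∘ σ) = L w) {v : ι → R} (hv : ∑ i, v i = 0) :
    L v = 0 := by
  rcases isEmpty_or_nonempty ι with hι | ⟨⟨i₀⟩⟩
  · simp [Subsingleton.elim v 0]
  have hbasis : ∀ i, L (Pi.single i 1) = L (Pi.single i₀ 1) := fun i => by
    rw [← hL (Equiv.swap i i₀), Pi.single_comp_equiv, Equiv.symm_swap, Equiv.swap_apply_left]
  calc L v = ∑ i, v i • L (Pi.single i 1) := by
        rw [L.pi_apply_eq_sum_univ v]
        refine sum_congr rfl fun i _ => ?_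
        congr
        ext j
        simp only [Pi.single_apply, eq_comm]
    _ = 0 := by simp only [hbasis, ← sum_smul, hv, zero_smul]

theorem fderiv_apply_eq_zero_of_comp_perm {𝕜 ι E : Type*} [NontriviallyNormedField 𝕜] [Fintype ι]
    [NormedAddCommGroup E] [NormedSpace 𝕜 E] {f : (ι → 𝕜) → E}
    (hf : ∀ (σ : Equiv.Perm ι) (a : ι → 𝕜), f (a ∘ σ) = f a) (x : 𝕜) {v : ι → 𝕜}
    (hv : ∑ i, v i = 0) : fderiv 𝕜 f (fun _ => x) v = 0 := by
  classical
  refine (fderiv 𝕜 f (fun _ => x)).toLinearMap.map_eq_zero_of_sum_eq_zero_of_comp_perm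
    (fun σ w => ?_) hv
  let T := ContinuousLinearEquiv.piCongrLeft 𝕜 (fun _ : ι => 𝕜) σ.symm
  have hT : ∀ w, T w = w ∘ σ := fun w => by
    ext i; simp [T, ContinuousLinearEquiv.piCongrLeft, Equiv.piCongrLeft_apply_eq_cast]
  have hfT : f ∘ T = f := funext fun a => by simp only [Function.comp_apply, hT, hf]
  have hchain := congr($(T.comp_right_fderiv (f := f) (x := fun _ => x)) w)
  rw [hfT] at hchain
  simp only [ContinuousLinearMap.comp_apply, ContinuousLinearEquiv.coe_coe, hT] at hchain
  exact hchain.symm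

theorem Convex.norm_sub_sub_fderiv_le_sq {E F : Type*} [NormedAddCommGroup E] [NormedSpace ℝ E]
    [NormedAddCommGroup F] [NormedSpace ℝ F] {f : E → F} {K : Set E} {C : ℝ} (hK : Convex ℝ K)
    (hf : ∀ z ∈ K, DifferentiableAt ℝ f z) (hf' : ∀ z ∈ K, DifferentiableAt ℝ (fderiv ℝ f) z)
    (bound : ∀ z ∈ K, ‖fderiv ℝ (fderiv ℝ f) z‖ ≤ C) {x y : E} (hx : x ∈ K) (hy : y ∈ K) :
    ‖f y - f x - fderiv ℝ f x (y - x)‖ ≤ C * ‖y - x‖ ^ 2 := by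
  have hC : 0 ≤ C := (norm_nonneg (fderiv ℝ (fderiv ℝ f) x)).trans (bound x hx)
  have hseg := hK.segment_subset hx hy
  have hlip : ∀ z ∈ segment ℝ x y, ‖fderiv ℝ f z - fderiv ℝ f x‖ ≤ C * ‖y - x‖ := fun z hz =>
    calc ‖fderiv ℝ f z - fderiv ℝ f x‖ ≤ C * ‖z - x‖ :=
          hK.norm_image_sub_le_of_norm_fderiv_le hf' bound hx (hseg hz)
      _ ≤ C * ‖y - x‖ := by gcongr; exact norm_sub_le_of_mem_segment hz
  calc ‖f y - f x - fderiv ℝ f x (y - x)‖ ≤ C * ‖y - x‖ * ‖y - x‖ :=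
        (convex_segment x y).norm_image_sub_le_of_norm_fderiv_le' (fun z hz => hf z (hseg hz))
          hlip (left_mem_segment ℝ x y) (right_mem_segment ℝ x y)
    _ = C * ‖y - x‖ ^ 2 := by ring

theorem ContDiffOn.exists_norm_sub_sub_fderiv_le_sq {E F : Type*} [NormedAddCommGroup E]
    [NormedSpace ℝ E] [NormedAddCommGroup F] [NormedSpace ℝ F] {f : E → F} {s K : Set E}
    (hf : ContDiffOn ℝ 2 f s) (hs : IsOpen s) (hK : IsCompact K) (hKc : Convex ℝ K)
    (hKs : K ⊆ s) :
    ∃ C > 0, ∀ x ∈ K, ∀ y ∈ K, ‖f y - f x - fderiv ℝ f x (y - x)‖ ≤ C * ‖y - x‖ ^ 2 := by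
  have hf' : ContDiffOn ℝ 1 (fderiv ℝ f) s := hf.fderiv_of_isOpen hs (by norm_num)
  obtain ⟨C, hC⟩ :=
    hK.exists_bound_of_continuousOn ((hf'.continuousOn_fderiv_of_isOpen hs le_rfl).mono hKs)
  refine ⟨max C 1, by positivity, fun x hx y hy => hKc.norm_sub_sub_fderiv_le_sq
    (fun z hz => ?_) (fun z hz => ?_) (fun z hz => (hC z hz).trans (le_max_left _ _)) hx hy⟩
  · exact (hf.contDiffAt (hs.mem_nhds (hKs hz))).differentiableAt two_ne_zero
  · exact (hf'.contDiffAt (hs.mem_nhds (hKs hz))).differentiableAt one_ne_zero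

section SumOfSquares

variable {ι : Type*} [Fintype ι]

theorem setOf_sum_sq_sub_le_eq_image_closedBall (c : ι → ℝ) (r : ℝ) :
    {a : ι → ℝ | ∑ j, (a j - c j) ^ 2 ≤ r ^ 2} =
      EuclideanSpace.equiv ι ℝ '' Metric.closedBall ((EuclideanSpace.equiv ι ℝ).symm c) |r| := by
  ext a
  rw [ContinuousLinearEquiv.image_eq_preimage_symm, Set.mem_preimage, Metric.mem_closedBall,
    EuclideanSpace.dist_eq, ← Real.sqrt_sq_eq_abs, Real.sqrt_le_sqrt_iff (sq_nonneg r)]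
  simp [Real.dist_eq, sq_abs]

theorem isCompact_setOf_sum_sq_sub_le (c : ι → ℝ) (r : ℝ) :
    IsCompact {a : ι → ℝ | ∑ j, (a j - c j) ^ 2 ≤ r ^ 2} := by
  rw [setOf_sum_sq_sub_le_eq_image_closedBall]
  exact (isCompact_closedBall _ _).image (ContinuousLinearEquiv.continuous _)

theorem convex_setOf_sum_sq_sub_le (c : ι → ℝ) (r : ℝ) :
    Convex ℝ {a : ι → ℝ | ∑ j, (a j - c j) ^ 2 ≤ r ^ 2} := by
  rw [setOf_sum_sq_sub_le_eq_image_closedBall]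
  exact (convex_closedBall _ _).linear_image (EuclideanSpace.equiv ι ℝ).toLinearMap

theorem sum_sub_mean_eq_zero (a : ι → ℝ) : ∑ j, (a j - (∑ i, a i) / Fintype.card ι) = 0 := by
  rcases isEmpty_or_nonempty ι with hι | hι
  · simp
  rw [sum_sub_distrib, sum_const, card_univ, nsmul_eq_mul, mul_div_cancel₀ _ (by positivity),
    sub_self]

theorem sum_sq_sub_eq_sum_sq_sub_mean_add (a : ι → ℝ) (c : ℝ) :
    ∑ j, (a j - c) ^ 2 =
      ∑ j, (a j - (∑ i, a i) / Fintype.card ι) ^ 2 +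
        Fintype.card ι * ((∑ i, a i) / Fintype.card ι - c) ^ 2 := by
  set m := (∑ i, a i) / Fintype.card ι
  have hsplit : ∀ j, (a j - c) ^ 2 = (a j - m) ^ 2 + 2 * (m - c) * (a j - m) + (m - c) ^ 2 :=
    fun j => by ring
  have hmean : ∑ j, (a j - m) = 0 := sum_sub_mean_eq_zero a
  simp only [hsplit, sum_add_distrib, ← mul_sum, hmean, sum_const, card_univ, nsmul_eq_mul,
    mul_zero, add_zero]

theorem sum_sq_mean_sub_le (a : ι → ℝ) (c : ℝ) :
    ∑ _j : ι, ((∑ i, a i) / Fintype.card ι - c) ^ 2 ≤ ∑ j, (a j - c) ^ 2 := by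
  rw [sum_sq_sub_eq_sum_sq_sub_mean_add a c, sum_const, card_univ, nsmul_eq_mul]
  exact le_add_of_nonneg_left (sum_nonneg fun j _ => sq_nonneg _)

theorem sq_norm_le_sum_sq (v : ι → ℝ) : ‖v‖ ^ 2 ≤ ∑ i, v i ^ 2 := by
  rw [← Real.le_sqrt (norm_nonneg v) (sum_nonneg fun i _ => sq_nonneg _),
    pi_norm_le_iff_of_nonneg (Real.sqrt_nonneg _)]
  intro i
  rw [Real.norm_eq_abs]
  exact Real.abs_le_sqrt (single_le_sum (f := fun j => v j ^ 2) (fun j _ => sq_nonneg _)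
    (mem_univ i))

end SumOfSquares

theorem stmt_6_general (n : ℕ) (c R : ℝ)
    (f : (Fin n → ℝ) → ℝ) (s : Set (Fin n → ℝ)) (hs : IsOpen s)
    (hball : {a : Fin n → ℝ | ∑ j, (a j - c) ^ 2 ≤ R ^ 2} ⊆ s)
    (hsym : ∀ (π : Equiv.Perm (Fin n)) (a : Fin n → ℝ), f (a ∘ π) = f a)
    (hf : ContDiffOn ℝ 2 f s) :
    ∃ δ > 0, ∀ a : Fin n → ℝ, ∑ j, (a j - c) ^ 2 ≤ R ^ 2 →
      |f a - f (fun _ => (∑ i, a i) / n)| ≤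
        δ * ∑ j, (a j - (∑ i, a i) / n) ^ 2 := by
  obtain ⟨C, hC, hTaylor⟩ := hf.exists_norm_sub_sub_fderiv_le_sq hs
    (isCompact_setOf_sum_sq_sub_le (fun _ => c) R) (convex_setOf_sum_sq_sub_le (fun _ => c) R)
    hball
  refine ⟨C, hC, fun a ha => ?_⟩
  set m : Fin n → ℝ := fun _ => (∑ i, a i) / n
  have hm : ∑ j, (m j - c) ^ 2 ≤ R ^ 2 := by
    simpa only [Fintype.card_fin] using (sum_sq_mean_sub_le a c).trans ha
  have hcrit : fderiv ℝ f m (a - m) = 0 := by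
    refine fderiv_apply_eq_zero_of_comp_perm hsym _ ?_
    simpa only [Fintype.card_fin, Pi.sub_apply, m] using sum_sub_mean_eq_zero a
  calc |f a - f m| = ‖f a - f m - fderiv ℝ f m (a - m)‖ := by
        rw [hcrit, sub_zero, Real.norm_eq_abs]
    _ ≤ C * ‖a - m‖ ^ 2 := hTaylor m hm a ha
    _ ≤ C * ∑ j, (a j - (∑ i, a i) / n) ^ 2 := by gcongr; exact sq_norm_le_sum_sq (a - m)

/-- For an indistinguishable function `f : ℝⁿ → ℝ` which is C² on an
open set containing the closed Euclidean ball of radius `R` around the symmetric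
point `(c,…,c)`, there is `δ > 0` such that for every profile `a` in that ball,
`|f(a) − r̄(m̄)| ≤ δ · ‖a − m̄^⊗n‖²` (Euclidean norm), where `m̄` is the mean of `a`
and `r̄` the diagonal restriction of `f`. The Euclidean ball and squared Euclidean
norm are written via sums of squares. -/
theorem stmt_6 (n : ℕ) (hn : 2 ≤ n) (c R : ℝ) (hR : 0 < R)
    (f : (Fin n → ℝ) → ℝ) (s : Set (Fin n → ℝ)) (hs : IsOpen s)
    (hball : {a : Fin n → ℝ | ∑ j, (a j - c) ^ 2 ≤ R ^ 2} ⊆ s)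
    (hsym : ∀ (π : Equiv.Perm (Fin n)) (a : Fin n → ℝ), f (a ∘ π) = f a)
    (hf : ContDiffOn ℝ 2 f s) :
    ∃ δ > 0, ∀ a : Fin n → ℝ, ∑ j, (a j - c) ^ 2 ≤ R ^ 2 →
      |f a - f (fun _ => (∑ i, a i) / n)| ≤
        δ * ∑ j, (a j - (∑ i, a i) / n) ^ 2 :=
  stmt_6_general n c R f s hs hball hsym hf
end

section
/- Let v̲ < v̄ be real numbers and let G : ℝ → ℝ be continuous on [v̲, v̄], differentiable on (v̲, v̄), and strictly positive on (v̲, v̄). Define the bid function h : (v̲, v̄) → ℝ by h(v) = v − (1/G(v)) ∫_{v̲}^{v} G(x) dx. Then h is differentiable on (v̲, v̄) and satisfies the first-order equilibrium ODE of the symmetric first-price auction: (v − h(v)) G'(v) = h'(v) G(v) for all v ∈ (v̲, v̄); equivalently, (h·G)'(v) = v G'(v). -/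
/-! With `F v = ∫_{v̲}^{v} G` we have `F' = G` by the fundamental theorem of calculus, so the
quotient rule applied to `h = id - F / G` gives `h' = F G' / G²`. Both identities are then algebra,
using `v - h v = F v / G v`. -/

open Set

theorem ContinuousOn.hasDerivAt_integral_of_mem_Ioo {E : Type*} [NormedAddCommGroup E]
    [NormedSpace ℝ E] [CompleteSpace E] {f : ℝ → E} {a b v : ℝ} (hf : ContinuousOn f (Icc a b))
    (hv : v ∈ Ioo a b) : HasDerivAt (fun t => ∫ x in a..t, f x) (f v) v := by
  have hsub : uIcc a v ⊆ Icc a b := by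
    rw [uIcc_of_le hv.1.le]
    exact Icc_subset_Icc le_rfl hv.2.le
  exact intervalIntegral.integral_hasDerivAt_right ((hf.mono hsub).intervalIntegrable)
    ((hf.mono Ioo_subset_Icc_self).stronglyMeasurableAtFilter isOpen_Ioo v hv)
    ((hf.mono Ioo_subset_Icc_self).continuousAt (isOpen_Ioo.mem_nhds hv))

theorem HasDerivAt.id_sub_one_div_mul {F G : ℝ → ℝ} {G' v : ℝ}
    (hF : HasDerivAt F (G v) v) (hG : HasDerivAt G G' v) (hGv : G v ≠ 0) :
    HasDerivAt (fun t => t - 1 / G t * F t) (F v * G' / G v ^ 2) v := by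
  have hfun : (fun t => t - 1 / G t * F t) = id - G⁻¹ * F := by
    funext t
    simp only [Pi.sub_apply, Pi.mul_apply, Pi.inv_apply, id, one_div]
  rw [hfun]
  refine ((hasDerivAt_id v).sub ((hG.inv hGv).mul hF)).congr_deriv ?_
  rw [Pi.inv_apply]
  field_simp
  ring

theorem stmt_16_general (vlo vhi : ℝ) (G : ℝ → ℝ)
    (hGc : ContinuousOn G (Set.Icc vlo vhi))
    (hGd : ∀ v ∈ Set.Ioo vlo vhi, DifferentiableAt ℝ G v)
    (hGpos : ∀ v ∈ Set.Ioo vlo vhi, 0 < G v)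
    (h : ℝ → ℝ)
    (hdef : ∀ v, h v = v - (1 / G v) * ∫ x in vlo..v, G x) :
    ∀ v ∈ Set.Ioo vlo vhi,
      DifferentiableAt ℝ h v ∧
      (v - h v) * deriv G v = deriv h v * G v ∧
      deriv (fun x => h x * G x) v = v * deriv G v := by
  intro v hv
  have hGv : G v ≠ 0 := (hGpos v hv).ne'
  have hG : HasDerivAt G (deriv G v) v := (hGd v hv).hasDerivAt
  have hh : HasDerivAt h ((∫ x in vlo..v, G x) * deriv G v / G v ^ 2) v := by
    rw [funext hdef]
    exact (hGc.hasDerivAt_integral_of_mem_Ioo hv).id_sub_one_div_mul hG hGv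
  refine ⟨hh.differentiableAt, ?_, ?_⟩
  · rw [hh.deriv, hdef]
    field_simp
    ring
  · change deriv (h * G) v = _
    rw [(hh.mul hG).deriv, hdef]
    field_simp
    ring

/-- Symmetric first-price auction. If `G` is continuous on
`[v̲,v̄]`, differentiable and strictly positive on `(v̲,v̄)`, then the bid
function `h(v) = v − (1/G(v)) ∫_{v̲}^{v} G(x) dx` is differentiable on `(v̲,v̄)`
and satisfies the first-order equilibrium ODE
`(v − h(v)) G'(v) = h'(v) G(v)`; equivalently `(h·G)'(v) = v G'(v)`. -/
theorem stmt_16 (vlo vhi : ℝ) (hlt : vlo < vhi) (G : ℝ → ℝ)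
    (hGc : ContinuousOn G (Set.Icc vlo vhi))
    (hGd : ∀ v ∈ Set.Ioo vlo vhi, DifferentiableAt ℝ G v)
    (hGpos : ∀ v ∈ Set.Ioo vlo vhi, 0 < G v)
    (h : ℝ → ℝ)
    (hdef : ∀ v, h v = v - (1 / G v) * ∫ x in vlo..v, G x) :
    ∀ v ∈ Set.Ioo vlo vhi,
      DifferentiableAt ℝ h v ∧
      (v - h v) * deriv G v = deriv h v * G v ∧
      deriv (fun x => h x * G x) v = v * deriv G v :=
  stmt_16_general vlo vhi G hGc hGd hGpos h hdef
end
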